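/- arXiv:math/0307360 — 3 statements merged into one kernel-verified Lean document; each statement's English description precedes it below -/
import Mathlib

section
/- Fix (p,q) ∈ ℝ² with 4p − 3q = 0 and a nonzero spinor Ψ ∈ Δ₇⁰. Then for every parameter vector ω ∈ S(p,q,Ψ) one has T(ω)·Ψ = (14/3)·Ψ. -/
/-!
Apply `γₘ` to the Killing equation at `X = eₘ` and sum over `m`. Three Clifford identities
evaluate the sums: `Σₘ γₘγₘ = -7`, `Σₘ γₘ (eₘ ⌟ ω) = k ω` for any `k`-form `ω`, and
`eₘ ∧ ω = eₘ · ω + eₘ ⌟ ω` for alternating `ω` (proved by induction on the degree), so that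
`Σₘ γₘ (eₘ ∧ F) = (4 - 7) F`. The result is `-7/2 Ψ + 3/4 T·Ψ + (4p - 3q) F·Ψ = 0`, and the
coupling condition removes the `F`-term.
-/

open Matrix

/-- A coordinate `k`-tensor on `ℝⁿ`: the values on `k`-tuples of standard basis vectors. -/
abbrev Tensor (n k : ℕ) := (Fin k → Fin n) → ℝ

/-- The tensor is alternating, i.e. it is the coordinate expression of an alternating
`k`-form on `ℝⁿ`. -/
def IsAlt {n k : ℕ} (ω : Tensor n k) : Prop :=
  ∀ (f : Fin k → Fin n) (σ : Equiv.Perm (Fin k)),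
    ω (f ∘ σ) = ((Equiv.Perm.sign σ : ℤ) : ℝ) * ω f

/-- The Clifford relations `γᵢγⱼ + γⱼγᵢ = -2 δᵢⱼ 𝟙`. -/
def CliffordRel {n N : ℕ} (γ : Fin n → Matrix (Fin N) (Fin N) ℝ) : Prop :=
  ∀ i j, γ i * γ j + γ j * γ i =
    if i = j then (-2 : ℝ) • (1 : Matrix (Fin N) (Fin N) ℝ) else 0

/-- Clifford action of a vector `X = Σ xᵢ eᵢ`: `γ(X) = Σ xᵢ γᵢ`. -/
noncomputable def gam {n N : ℕ} (γ : Fin n → Matrix (Fin N) (Fin N) ℝ)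
    (X : Fin n → ℝ) : Matrix (Fin N) (Fin N) ℝ :=
  ∑ i, X i • γ i

/-- Clifford action of an (alternating) `k`-form:
`ρ(ω) = Σ_{i₁<⋯<i_k} ω(e_{i₁},…,e_{i_k}) γ_{i₁}⋯γ_{i_k}`, written here as the
full sum over all tuples divided by `k!` (for alternating `ω` and `γ` satisfying the
Clifford relations the two expressions agree). -/
noncomputable def rho {n N : ℕ} (γ : Fin n → Matrix (Fin N) (Fin N) ℝ) {k : ℕ}
    (ω : Tensor n k) : Matrix (Fin N) (Fin N) ℝ :=
  (k.factorial : ℝ)⁻¹ • ∑ f : Fin k → Fin n, ω f • (List.ofFn fun i => γ (f i)).prod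

/-- Interior product `X ⌟ ω` in coordinates: `(X⌟ω)(Y₁,…,Y_{k}) = ω(X,Y₁,…,Y_{k})`. -/
noncomputable def inter {n k : ℕ} (X : Fin n → ℝ) (ω : Tensor n (k + 1)) : Tensor n k :=
  fun g => ∑ j, X j * ω (Fin.cons j g)

/-- Exterior product `X ∧ ω` in coordinates (identifying `X` with a `1`-form via the
standard inner product): `(X∧ω)(Y₀,…,Y_k) = Σ_j (-1)^j ⟨X,Y_j⟩ ω(Y₀,…,Ŷ_j,…,Y_k)`. -/
noncomputable def wedge {n k : ℕ} (X : Fin n → ℝ) (ω : Tensor n k) : Tensor n (k + 1) :=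
  fun h => ∑ j : Fin (k + 1), (-1 : ℝ) ^ (j : ℕ) * X (h j) * ω fun i => h (j.succAbove i)

/-- The elementary form `e_{v 0} ∧ ⋯ ∧ e_{v (k-1)}` in coordinates. -/
noncomputable def elem {n k : ℕ} (v : Fin k → Fin n) : Tensor n k :=
  fun f => Matrix.det (Matrix.of fun i j => if v i = f j then (1 : ℝ) else 0)

/-! ### The `SU(2)`-invariant families of `3`- and `4`-forms on `ℝ⁷`
(indices are `0`-based: `e₁ = E7 0, …, e₇ = E7 6`). -/

/-- The standard basis vectors of `ℝ⁷`. -/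
noncomputable def E7 (i : Fin 7) : Fin 7 → ℝ := Pi.single i 1

/-- `de₁ = e₃₅ + e₄₆`, `de₂ = e₄₅ - e₃₆`, `de₇ = e₃₄ - e₅₆`. -/
noncomputable def de : Fin 3 → Tensor 7 2 :=
  ![elem ![2, 4] + elem ![3, 5], elem ![3, 4] - elem ![2, 5], elem ![2, 3] - elem ![4, 5]]

/-- The distinguished indices `1, 2, 7` (0-based: `0, 1, 6`). -/
def idx : Fin 3 → Fin 7 := ![0, 1, 6]

/-- The distinguished index pairs `(1,2), (1,7), (2,7)` (0-based). -/
def pf : Fin 3 → Fin 7 × Fin 7 := ![(0, 1), (0, 6), (1, 6)]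

/-- The 20-dimensional parameter space
`ω = ((t_{ij}), t, (f_{ijk}), f) ∈ ℝ⁹ × ℝ × ℝ⁹ × ℝ ≅ ℝ²⁰`. -/
abbrev Param20 := (Fin 3 → Fin 3 → ℝ) × ℝ × (Fin 3 → Fin 3 → ℝ) × ℝ

/-- The invariant `3`-form `T(ω) = Σ t_{ij} eᵢ ∧ deⱼ + t e₁∧e₂∧e₇`. -/
noncomputable def Tform (ω : Param20) : Tensor 7 3 :=
  (∑ i : Fin 3, ∑ j : Fin 3, ω.1 i j • wedge (E7 (idx i)) (de j))
    + ω.2.1 • elem ![0, 1, 6]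

/-- The invariant `4`-form `F(ω) = Σ f_{ijk} eᵢ ∧ eⱼ ∧ deₖ + f e₃∧e₄∧e₅∧e₆`. -/
noncomputable def Fform (ω : Param20) : Tensor 7 4 :=
  (∑ i : Fin 3, ∑ j : Fin 3,
      ω.2.2.1 i j • wedge (E7 (pf i).1) (wedge (E7 (pf i).2) (de j)))
    + ω.2.2.2 • elem ![2, 3, 4, 5]

/-- Membership in `Δ₇⁰`, the common kernel of `γ₃γ₄+γ₅γ₆`, `γ₃γ₅-γ₄γ₆`, `γ₃γ₆+γ₄γ₅`. -/
def InDelta0 (γ : Fin 7 → Matrix (Fin 8) (Fin 8) ℝ) (Ψ : Fin 8 → ℝ) : Prop :=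
  (γ 2 * γ 3 + γ 4 * γ 5).mulVec Ψ = 0 ∧
    (γ 2 * γ 4 - γ 3 * γ 5).mulVec Ψ = 0 ∧
    (γ 2 * γ 5 + γ 3 * γ 4).mulVec Ψ = 0

/-- The solution set `S(p,q,Ψ) ⊆ ℝ²⁰` of the algebraic Killing equation
`(1/2)XΨ + (1/4)(X⌟T(ω))Ψ + p (X⌟F(ω))Ψ + q (X∧F(ω))Ψ = 0` for all `X`. -/
def KillingSet (γ : Fin 7 → Matrix (Fin 8) (Fin 8) ℝ) (p q : ℝ) (Ψ : Fin 8 → ℝ) :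
    Set Param20 :=
  {ω | ∀ X : Fin 7 → ℝ,
    (1 / 2 : ℝ) • (gam γ X).mulVec Ψ
      + (1 / 4 : ℝ) • (rho γ (inter X (Tform ω))).mulVec Ψ
      + p • (rho γ (inter X (Fform ω))).mulVec Ψ
      + q • (rho γ (wedge X (Fform ω))).mulVec Ψ = 0}

section Alternating

variable {n : ℕ}

def altSubmodule (n k : ℕ) : Submodule ℝ (Tensor n k) where
  carrier := {ω | IsAlt ω}
  add_mem' {ω τ} hω hτ f σ := by
    simp only [Pi.add_apply, hω f σ, hτ f σ]
    ring
  zero_mem' f σ := by simp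
  smul_mem' c ω hω f σ := by
    simp only [Pi.smul_apply, smul_eq_mul, hω f σ]
    ring

theorem mem_altSubmodule {k : ℕ} {ω : Tensor n k} : ω ∈ altSubmodule n k ↔ IsAlt ω :=
  Iff.rfl

theorem isAlt_elem {k : ℕ} (v : Fin k → Fin n) : IsAlt (elem v) := fun f σ =>
  Matrix.det_permute' σ (Matrix.of fun i j => if v i = f j then (1 : ℝ) else 0)

theorem IsAlt.cons_cons {k : ℕ} {ω : Tensor n (k + 2)} (hω : IsAlt ω) (a b : Fin n)
    (g : Fin k → Fin n) :
    ω (Fin.cons a (Fin.cons b g)) = -ω (Fin.cons b (Fin.cons a g)) := by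
  have hswap : (Fin.cons b (Fin.cons a g) : Fin (k + 2) → Fin n) ∘ Equiv.swap 0 1
      = Fin.cons a (Fin.cons b g) := by
    funext i
    refine Fin.cases ?_ (Fin.cases ?_ fun c => ?_) i
    · simp
    · simp
    · simp [Equiv.swap_apply_of_ne_of_ne (Fin.succ_ne_zero _) (Fin.succ_succ_ne_one c)]
  rw [← hswap, hω, Equiv.Perm.sign_swap (by simp)]
  simp

theorem inter_single {k : ℕ} (m : Fin n) (ω : Tensor n (k + 1)) :
    inter (Pi.single m 1) ω = fun g => ω (Fin.cons m g) := by
  funext g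
  simp [inter, Pi.single_apply, ite_mul]

theorem inter_eq_sum {k : ℕ} (X : Fin n → ℝ) (ω : Tensor n (k + 1)) :
    inter X ω = ∑ m, X m • inter (Pi.single m 1) ω := by
  funext g
  simp [inter, inter_single]

theorem IsAlt.inter_single {k : ℕ} {ω : Tensor n (k + 1)} (hω : IsAlt ω) (m : Fin n) :
    IsAlt (inter (Pi.single m 1) ω) := by
  intro f σ
  simp only [_root_.inter_single]
  have hcons : (Fin.cons m f : Fin (k + 1) → Fin n) ∘ Equiv.Perm.decomposeFin.symm (0, σ)
      = Fin.cons m (f ∘ σ) := by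
    funext i
    refine Fin.cases ?_ (fun b => ?_) i <;> simp [Equiv.Perm.decomposeFin_symm_apply_succ]
  rw [← hcons, hω, Equiv.Perm.decomposeFin.symm_sign]
  simp

theorem IsAlt.inter_inter_single {k : ℕ} {ω : Tensor n (k + 2)} (hω : IsAlt ω) (m : Fin n)
    (X : Fin n → ℝ) :
    inter X (inter (Pi.single m 1) ω) = -inter (Pi.single m 1) (inter X ω) := by
  rw [_root_.inter_single, _root_.inter_single]
  funext g
  simp only [inter, hω.cons_cons m, Pi.neg_apply, mul_neg, Finset.sum_neg_distrib]

theorem wedge_add {k : ℕ} (X : Fin n → ℝ) (ω τ : Tensor n k) :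
    wedge X (ω + τ) = wedge X ω + wedge X τ := by
  funext h
  simp only [wedge, Pi.add_apply, mul_add, Finset.sum_add_distrib]

theorem wedge_sub {k : ℕ} (X : Fin n → ℝ) (ω τ : Tensor n k) :
    wedge X (ω - τ) = wedge X ω - wedge X τ := by
  funext h
  simp only [wedge, Pi.sub_apply, mul_sub, Finset.sum_sub_distrib]

/-- Laplace expansion of the determinant along its first row. -/
theorem wedge_single_elem {k : ℕ} (a : Fin n) (v : Fin k → Fin n) :
    wedge (Pi.single a 1) (elem v) = elem (Fin.cons a v) := by
  funext f
  rw [elem, Matrix.det_succ_row_zero, wedge]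
  refine Finset.sum_congr rfl fun j _ => ?_
  simp only [Pi.single_apply, Matrix.of_apply, Fin.cons_zero, eq_comm (a := f j), elem]
  rfl

theorem inter_single_wedge {k : ℕ} (m : Fin n) (X : Fin n → ℝ) (ω : Tensor n (k + 1)) :
    inter (Pi.single m 1) (wedge X ω) = X m • ω - wedge X (inter (Pi.single m 1) ω) := by
  simp only [inter_single]
  funext g
  have hcons (j : Fin (k + 1)) :
      (fun i => (Fin.cons m g : Fin (k + 2) → Fin n) (j.succ.succAbove i))
        = Fin.cons m fun i => g (j.succAbove i) :=
    Fin.cons_comp_succ_succAbove m g j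
  rw [wedge, Fin.sum_univ_succ]
  simp only [hcons, Fin.cons_zero, Fin.cons_succ, Fin.zero_succAbove, Fin.val_zero, Fin.val_succ,
    pow_zero, pow_succ, one_mul, Pi.sub_apply, Pi.smul_apply, smul_eq_mul, wedge, mul_neg, mul_one,
    neg_mul, Finset.sum_neg_distrib, ← sub_eq_add_neg]

end Alternating

section CliffordAction

variable {n N : ℕ} (γ : Fin n → Matrix (Fin N) (Fin N) ℝ)

noncomputable def rhoLinearMap (k : ℕ) : Tensor n k →ₗ[ℝ] Matrix (Fin N) (Fin N) ℝ where
  toFun := rho γ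
  map_add' ω τ := by simp [rho, add_smul, Finset.sum_add_distrib]
  map_smul' c ω := by simp [rho, mul_smul, Finset.smul_sum, smul_comm c]

theorem rho_smul {k : ℕ} (c : ℝ) (ω : Tensor n k) : rho γ (c • ω) = c • rho γ ω :=
  map_smul (rhoLinearMap γ k) c ω

theorem rho_sub {k : ℕ} (ω τ : Tensor n k) : rho γ (ω - τ) = rho γ ω - rho γ τ :=
  map_sub (rhoLinearMap γ k) ω τ

theorem rho_neg {k : ℕ} (ω : Tensor n k) : rho γ (-ω) = -rho γ ω :=
  map_neg (rhoLinearMap γ k) ω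

theorem rho_sum {k : ℕ} {ι : Type*} (s : Finset ι) (ω : ι → Tensor n k) :
    rho γ (∑ i ∈ s, ω i) = ∑ i ∈ s, rho γ (ω i) :=
  map_sum (rhoLinearMap γ k) ω s

theorem gam_single (m : Fin n) : gam γ (Pi.single m 1) = γ m := by
  simp [gam, Pi.single_apply, ite_smul]

theorem rho_inter {k : ℕ} (X : Fin n → ℝ) (ω : Tensor n (k + 1)) :
    rho γ (inter X ω) = ∑ m, X m • rho γ (inter (Pi.single m 1) ω) := by
  simp only [inter_eq_sum X ω, rho_sum, rho_smul]

theorem sum_fin_succ_pi {α M : Type*} [Fintype α] [AddCommMonoid M] {k : ℕ}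
    (F : (Fin (k + 1) → α) → M) :
    ∑ f, F f = ∑ a, ∑ g : Fin k → α, F (Fin.cons a g) := by
  rw [← (Fin.consEquiv fun _ => α).sum_comp F, Fintype.sum_prod_type]
  rfl

theorem sum_mul_rho_inter_single {k : ℕ} (ω : Tensor n (k + 1)) :
    ∑ m, γ m * rho γ (inter (Pi.single m 1) ω) = ((k : ℝ) + 1) • rho γ ω := by
  have hfac : ((k : ℝ) + 1) * ((k + 1).factorial : ℝ)⁻¹ = (k.factorial : ℝ)⁻¹ := by
    rw [Nat.factorial_succ, Nat.cast_mul]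
    field_simp
    push_cast
    ring
  rw [rho, smul_smul, hfac, sum_fin_succ_pi, Finset.smul_sum]
  refine Finset.sum_congr rfl fun m _ => ?_
  simp [rho, inter_single, List.ofFn_succ, Finset.mul_sum]

theorem rho_wedge_of_degree_zero (X : Fin n → ℝ) (ω : Tensor n 0) :
    rho γ (wedge X ω) = gam γ X * rho γ ω := by
  simp [rho, wedge, gam, sum_fin_succ_pi, Finset.smul_sum, smul_smul, mul_comm,
    Subsingleton.elim _ (default : Fin 0 → Fin n)]

end CliffordAction

namespace CliffordRel

variable {n N : ℕ} {γ : Fin n → Matrix (Fin N) (Fin N) ℝ}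

theorem mul_self (hγ : CliffordRel γ) (m : Fin n) : γ m * γ m = -1 := by
  have h := hγ m m
  rw [if_pos rfl] at h
  linear_combination (norm := module) (1 / 2 : ℝ) • h

theorem sum_mul_self (hγ : CliffordRel γ) :
    ∑ m, γ m * γ m = (-(n : ℝ)) • (1 : Matrix (Fin N) (Fin N) ℝ) := by
  simp only [hγ.mul_self, Finset.sum_neg_distrib, Finset.sum_const, Finset.card_univ,
    Fintype.card_fin, neg_smul, Nat.cast_smul_eq_nsmul]

theorem mul_gam (hγ : CliffordRel γ) (m : Fin n) (X : Fin n → ℝ) :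
    γ m * gam γ X = -(gam γ X * γ m) - (2 * X m) • (1 : Matrix (Fin N) (Fin N) ℝ) := by
  have hanti (i : Fin n) : γ m * γ i
      = -(γ i * γ m) + if m = i then (-2 : ℝ) • (1 : Matrix (Fin N) (Fin N) ℝ) else 0 := by
    rw [← hγ m i]
    abel
  simp only [gam, Finset.mul_sum, Finset.sum_mul, mul_smul_comm, smul_mul_assoc, hanti,
    smul_add, smul_ite, smul_zero, Finset.sum_add_distrib, Finset.sum_ite_eq, Finset.mem_univ,
    if_true, smul_neg, Finset.sum_neg_distrib]
  module

theorem sum_mul_gam_mul (hγ : CliffordRel γ) (X : Fin n → ℝ)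
    (R : Fin n → Matrix (Fin N) (Fin N) ℝ) :
    ∑ m, γ m * (gam γ X * R m)
      = -(gam γ X * ∑ m, γ m * R m) - (2 : ℝ) • ∑ m, X m • R m := by
  simp only [← mul_assoc, hγ.mul_gam, sub_mul, neg_mul, smul_mul_assoc, one_mul,
    Finset.sum_sub_distrib, Finset.sum_neg_distrib, Finset.mul_sum, Finset.smul_sum, smul_smul]

/-- The inductive step behind `rho_wedge`: the identity for `ω` follows from the identity for
the contractions `eₘ ⌟ ω`, summed against `γₘ`. -/
theorem rho_wedge_of_sum (hγ : CliffordRel γ) {k : ℕ} (ω : Tensor n (k + 1))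
    (X : Fin n → ℝ)
    (h : ∑ m, γ m * rho γ (wedge X (inter (Pi.single m 1) ω))
      = ∑ m, γ m * (gam γ X * rho γ (inter (Pi.single m 1) ω)) - (k : ℝ) • rho γ (inter X ω)) :
    rho γ (wedge X ω) = gam γ X * rho γ ω + rho γ (inter X ω) := by
  have key := sum_mul_rho_inter_single γ (wedge X ω)
  simp only [inter_single_wedge, rho_sub, rho_smul, mul_sub, Finset.sum_sub_distrib,
    mul_smul_comm] at key
  rw [h, hγ.sum_mul_gam_mul, sum_mul_rho_inter_single, ← rho_inter] at key
  have hgam : ∑ m, X m • (γ m * rho γ ω) = gam γ X * rho γ ω := by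
    simp only [gam, Finset.sum_mul, smul_mul_assoc]
  rw [hgam, mul_smul_comm] at key
  push_cast at key
  have hk : (k : ℝ) + 1 + 1 ≠ 0 := by positivity
  apply smul_right_injective _ hk
  beta_reduce
  rw [← key]
  module

theorem rho_wedge (hγ : CliffordRel γ) :
    ∀ {k : ℕ} {ω : Tensor n (k + 1)}, IsAlt ω → ∀ X : Fin n → ℝ,
      rho γ (wedge X ω) = gam γ X * rho γ ω + rho γ (inter X ω)
  | 0, ω, _, X => hγ.rho_wedge_of_sum ω X (by simp [rho_wedge_of_degree_zero])
  | k + 1, ω, hω, X => hγ.rho_wedge_of_sum ω X <| by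
      simp only [hγ.rho_wedge (hω.inter_single _) X, hω.inter_inter_single, rho_neg, mul_add,
        mul_neg, Finset.sum_add_distrib, Finset.sum_neg_distrib, sum_mul_rho_inter_single]
      push_cast
      abel

theorem sum_mul_rho_wedge_single (hγ : CliffordRel γ) {k : ℕ} {ω : Tensor n (k + 1)}
    (hω : IsAlt ω) :
    ∑ m, γ m * rho γ (wedge (Pi.single m 1) ω) = ((k : ℝ) + 1 - n) • rho γ ω := by
  simp only [hγ.rho_wedge hω, gam_single, mul_add, ← mul_assoc, Finset.sum_add_distrib,
    ← Finset.sum_mul, hγ.sum_mul_self, sum_mul_rho_inter_single, smul_mul_assoc, one_mul]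
  module

end CliffordRel

/-- Contracting the Killing equation at `X = eₘ` with `γₘ` and summing over `m`. -/
theorem CliffordRel.killing_contraction {n N : ℕ} {γ : Fin n → Matrix (Fin N) (Fin N) ℝ}
    (hγ : CliffordRel γ) {k l : ℕ} {T : Tensor n (k + 1)} {F : Tensor n (l + 1)}
    (hF : IsAlt F) {p q : ℝ} {Ψ : Fin N → ℝ}
    (h : ∀ X : Fin n → ℝ,
      (1 / 2 : ℝ) • (gam γ X).mulVec Ψ
        + (1 / 4 : ℝ) • (rho γ (inter X T)).mulVec Ψ
        + p • (rho γ (inter X F)).mulVec Ψ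
        + q • (rho γ (wedge X F)).mulVec Ψ = 0) :
    (-(n : ℝ) / 2) • Ψ + (((k : ℝ) + 1) / 4) • (rho γ T).mulVec Ψ
      + (p * ((l : ℝ) + 1) + q * ((l : ℝ) + 1 - n)) • (rho γ F).mulVec Ψ = 0 := by
  have hsum := Finset.sum_eq_zero (s := Finset.univ) fun m _ =>
    (congrArg (γ m *ᵥ ·) (h (Pi.single m 1))).trans (mulVec_zero (γ m))
  simp only [mulVec_add, mulVec_smul, mulVec_mulVec, gam_single, Finset.sum_add_distrib,
    ← Finset.smul_sum, ← sum_mulVec, hγ.sum_mul_self, sum_mul_rho_inter_single,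
    hγ.sum_mul_rho_wedge_single hF, smul_mulVec, one_mulVec] at hsum
  rw [← hsum]
  module

theorem isAlt_wedge_wedge_de (a b : Fin 7) (j : Fin 3) :
    IsAlt (wedge (E7 a) (wedge (E7 b) (de j))) := by
  rw [← mem_altSubmodule]
  fin_cases j <;>
    simp only [de, E7, Fin.zero_eta, Fin.mk_one, Fin.reduceFinMk, Matrix.cons_val, wedge_add,
      wedge_sub, wedge_single_elem] <;>
    first
    | exact add_mem (isAlt_elem _) (isAlt_elem _)
    | exact sub_mem (isAlt_elem _) (isAlt_elem _)

theorem isAlt_Fform (ω : Param20) : IsAlt (Fform ω) := by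
  rw [← mem_altSubmodule]
  refine add_mem (Submodule.sum_mem _ fun i _ => Submodule.sum_mem _ fun j _ => ?_)
    (Submodule.smul_mem _ _ (isAlt_elem _))
  exact Submodule.smul_mem _ _ (isAlt_wedge_wedge_de _ _ j)

theorem torsion_acts_by_fourteen_thirds_of_special_coupling_general
    (γ : Fin 7 → Matrix (Fin 8) (Fin 8) ℝ) (hγ : CliffordRel γ)
    (p q : ℝ) (hpq : 4 * p - 3 * q = 0)
    (Ψ : Fin 8 → ℝ) :
    ∀ ω ∈ KillingSet γ p q Ψ, (rho γ (Tform ω)).mulVec Ψ = (14 / 3 : ℝ) • Ψ := by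
  intro ω hω
  have h := hγ.killing_contraction (isAlt_Fform ω) hω
  have hF : p * (((3 : ℕ) : ℝ) + 1) + q * (((3 : ℕ) : ℝ) + 1 - ((7 : ℕ) : ℝ)) = 0 := by
    push_cast
    linear_combination hpq
  rw [hF, zero_smul, add_zero] at h
  linear_combination (norm := module) (4 / 3 : ℝ) • h

/-- For fixed `(p,q)` with `4p - 3q = 0` and a nonzero spinor
`Ψ ∈ Δ₇⁰`, every `ω ∈ S(p,q,Ψ)` satisfies `T(ω)·Ψ = (14/3)·Ψ`. -/
theorem torsion_acts_by_fourteen_thirds_of_special_coupling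
    (γ : Fin 7 → Matrix (Fin 8) (Fin 8) ℝ) (hγ : CliffordRel γ)
    (p q : ℝ) (hpq : 4 * p - 3 * q = 0)
    (Ψ : Fin 8 → ℝ) (hΨ : InDelta0 γ Ψ) (hne : Ψ ≠ 0) :
    ∀ ω ∈ KillingSet γ p q Ψ, (rho γ (Tform ω)).mulVec Ψ = (14 / 3 : ℝ) • Ψ :=
  torsion_acts_by_fourteen_thirds_of_special_coupling_general γ hγ p q hpq Ψ
end

section
/- For all X ∈ ℝ⁷ one has X·Ψ − (1/3)·(X⌟ω³)·Ψ = 0; equivalently, (X⌟ω³)·Ψ = 3·X·Ψ. (This is the decoupled torsion part of the Killing equation: the choice T = −(4/3)·ω³ satisfies X·Ψ + (1/4)·(X⌟T)·Ψ = 0 for all X.) -/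
open Matrix

/-! ### The `3`-form `ω³` of a unit spinor and its Hodge dual. -/

/-- The `3`-form `ω³(X,Y,Z) = -⟨X·(Y·(Z·Ψ)), Ψ⟩` in coordinates. -/
noncomputable def omega3 (γ : Fin 7 → Matrix (Fin 8) (Fin 8) ℝ) (Ψ : Fin 8 → ℝ) :
    Tensor 7 3 :=
  fun f => -((γ (f 0) * γ (f 1) * γ (f 2)).mulVec Ψ ⬝ᵥ Ψ)

/-- The Hodge dual `4`-form of a `3`-form on `ℝ⁷` (standard inner product and
orientation): `(*ω)(f) = (1/3!) Σ_g ω(g) · sgn(g,f)`, where `sgn(g,f)` is the sign of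
the combined tuple `(g,f)` as a permutation of `(1,…,7)` (and `0` if not injective);
on elementary forms this is `*(e_J) = sgn(σ) e_{J^c}` for `σ : (1,…,7) ↦ (J, J^c)`. -/
noncomputable def hstar (ω : Tensor 7 3) : Tensor 7 4 :=
  fun f => ((Nat.factorial 3 : ℝ))⁻¹ * ∑ g : Fin 3 → Fin 7,
    ω g * elem (Fin.append g f) (fun j => Fin.cast (by norm_num) j)

section
variable {γ : Fin 7 → Matrix (Fin 8) (Fin 8) ℝ} {Ψ : Fin 8 → ℝ}

lemma hadj (hskew : ∀ i, (γ i)ᵀ = -γ i) (i : Fin 7) (v w : Fin 8 → ℝ) :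
    (γ i).mulVec v ⬝ᵥ w = -(v ⬝ᵥ (γ i).mulVec w) := by
  rw [Matrix.dotProduct_mulVec, ← Matrix.mulVec_transpose, hskew,
    Matrix.neg_mulVec, neg_dotProduct, neg_neg]

lemma hsq (hγ : CliffordRel γ) (i : Fin 7) : γ i * γ i = -(1 : Matrix (Fin 8) (Fin 8) ℝ) := by
  have h := hγ i i
  simp only [if_pos rfl] at h
  have h2 : (2:ℝ) • (γ i * γ i) = (2:ℝ) • (-(1 : Matrix (Fin 8) (Fin 8) ℝ)) := by
    rw [two_smul]; rw [h]; rw [smul_neg]; norm_num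
  exact smul_right_injective _ (two_ne_zero) h2

lemma orthPsi (hskew : ∀ i, (γ i)ᵀ = -γ i) (i : Fin 7) : (γ i).mulVec Ψ ⬝ᵥ Ψ = 0 := by
  have h := hadj hskew i Ψ Ψ
  rw [dotProduct_comm] at h ⊢
  linarith

lemma orth (hγ : CliffordRel γ) (hskew : ∀ i, (γ i)ᵀ = -γ i) (hunit : Ψ ⬝ᵥ Ψ = 1)
    (i j : Fin 7) :
    (γ i).mulVec Ψ ⬝ᵥ (γ j).mulVec Ψ = if i = j then (1:ℝ) else 0 := by
  have h1 : (γ i).mulVec Ψ ⬝ᵥ (γ j).mulVec Ψ = -(Ψ ⬝ᵥ (γ i * γ j).mulVec Ψ) := by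
    rw [hadj hskew i, Matrix.mulVec_mulVec]
  have h2 : (γ i).mulVec Ψ ⬝ᵥ (γ j).mulVec Ψ = -(Ψ ⬝ᵥ (γ j * γ i).mulVec Ψ) := by
    rw [dotProduct_comm, hadj hskew j, Matrix.mulVec_mulVec]
  have h3 : (2:ℝ) * ((γ i).mulVec Ψ ⬝ᵥ (γ j).mulVec Ψ)
      = -(Ψ ⬝ᵥ ((γ i * γ j + γ j * γ i)).mulVec Ψ) := by
    rw [Matrix.add_mulVec, dotProduct_add, neg_add, ← h1, ← h2]; ring
  rw [hγ i j] at h3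
  by_cases hij : i = j
  · simp only [if_pos hij] at h3 ⊢
    rw [Matrix.smul_mulVec, Matrix.one_mulVec, dotProduct_smul] at h3
    rw [hunit] at h3
    simp at h3
    linarith
  · simp only [if_neg hij] at h3 ⊢
    rw [Matrix.zero_mulVec, dotProduct_zero] at h3
    linarith
lemma complete (hγ : CliffordRel γ) (hskew : ∀ i, (γ i)ᵀ = -γ i) (hunit : Ψ ⬝ᵥ Ψ = 1)
    (w : Fin 8 → ℝ) :
    (Ψ ⬝ᵥ w) • Ψ + ∑ c, (((γ c).mulVec Ψ) ⬝ᵥ w) • ((γ c).mulVec Ψ) = w := by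
  set M : Matrix (Fin 8) (Fin 8) ℝ :=
    Matrix.of (Fin.cons Ψ (fun c => (γ c).mulVec Ψ) : Fin 8 → Fin 8 → ℝ) with hMdef
  have hrow0 : M 0 = Ψ := rfl
  have hrowS : ∀ c : Fin 7, M c.succ = (γ c).mulVec Ψ := fun c => rfl
  have hM : M * Mᵀ = 1 := by
    ext i j
    rw [Matrix.mul_apply]
    have : ∀ k, M i k * Mᵀ k j = M i k * M j k := fun k => rfl
    simp only [this]
    show (M i ⬝ᵥ M j) = (1 : Matrix (Fin 8) (Fin 8) ℝ) i j
    induction i using Fin.cases with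
    | zero =>
      induction j using Fin.cases with
      | zero => simp [hrow0, hunit, Matrix.one_apply]
      | succ c =>
        rw [hrow0, hrowS, dotProduct_comm, orthPsi hskew]
        simp [Matrix.one_apply, (Fin.succ_ne_zero c).symm]
    | succ c =>
      induction j using Fin.cases with
      | zero =>
        rw [hrow0, hrowS, orthPsi hskew]
        simp [Matrix.one_apply, Fin.succ_ne_zero c]
      | succ d =>
        rw [hrowS, hrowS, orth hγ hskew hunit]
        simp [Matrix.one_apply, Fin.succ_inj]
  have hMM : Mᵀ * M = 1 := mul_eq_one_comm.mp hM
  have h1 : Mᵀ.mulVec (M.mulVec w) = w := by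
    rw [Matrix.mulVec_mulVec, hMM, Matrix.one_mulVec]
  calc (Ψ ⬝ᵥ w) • Ψ + ∑ c, (((γ c).mulVec Ψ) ⬝ᵥ w) • ((γ c).mulVec Ψ)
      = ∑ k : Fin 8, ((M k ⬝ᵥ w) • M k) := by
        rw [Fin.sum_univ_succ]; rfl
    _ = Mᵀ.mulVec (M.mulVec w) := by
        funext j
        rw [Matrix.mulVec, dotProduct]
        simp only [Finset.sum_apply, Pi.smul_apply, smul_eq_mul, Matrix.transpose_apply,
          Matrix.mulVec, dotProduct]
        exact Finset.sum_congr rfl fun k _ => by ring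
    _ = w := h1

lemma sumMat_mulVec {ι : Type*} (s : Finset ι) (A : ι → Matrix (Fin 8) (Fin 8) ℝ)
    (v : Fin 8 → ℝ) : (∑ i ∈ s, A i).mulVec v = ∑ i ∈ s, (A i).mulVec v :=
  map_sum (Matrix.mulVec.addMonoidHomLeft v) A s

lemma s_eq (hskew : ∀ i, (γ i)ᵀ = -γ i) (m a b : Fin 7) :
    ((γ m * γ a * γ b).mulVec Ψ) ⬝ᵥ Ψ
      = ((γ a * γ m).mulVec Ψ) ⬝ᵥ ((γ b).mulVec Ψ) := by
  have h : (γ m * γ a * γ b).mulVec Ψ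
      = (γ m).mulVec ((γ a).mulVec ((γ b).mulVec Ψ)) := by
    rw [Matrix.mulVec_mulVec, Matrix.mulVec_mulVec, mul_assoc]
  rw [h, hadj hskew m, hadj hskew a, neg_neg, Matrix.mulVec_mulVec, dotProduct_comm]

lemma key2 (hγ : CliffordRel γ) (hskew : ∀ i, (γ i)ᵀ = -γ i) (hunit : Ψ ⬝ᵥ Ψ = 1)
    (m : Fin 7) :
    ∑ a : Fin 7, ∑ b : Fin 7,
        (-(((γ m * γ a * γ b).mulVec Ψ) ⬝ᵥ Ψ)) • ((γ a * γ b).mulVec Ψ)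
      = (6 : ℝ) • (γ m).mulVec Ψ := by
  have inner : ∀ a : Fin 7,
      ∑ b : Fin 7, (-(((γ m * γ a * γ b).mulVec Ψ) ⬝ᵥ Ψ)) • ((γ a * γ b).mulVec Ψ)
        = (γ m).mulVec Ψ - (if a = m then (1:ℝ) else 0) • (γ a).mulVec Ψ := by
    intro a
    set u : Fin 8 → ℝ := (γ a * γ m).mulVec Ψ with hu
    have hPsiu : Ψ ⬝ᵥ u = -(if a = m then (1:ℝ) else 0) := by
      rw [hu, dotProduct_comm, ← Matrix.mulVec_mulVec, hadj hskew a,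
        dotProduct_comm, orth hγ hskew hunit]
    have hstep : ∀ b : Fin 7,
        (-(((γ m * γ a * γ b).mulVec Ψ) ⬝ᵥ Ψ)) • ((γ a * γ b).mulVec Ψ)
          = (γ a).mulVecLin ((-(u ⬝ᵥ ((γ b).mulVec Ψ))) • ((γ b).mulVec Ψ)) := by
      intro b
      rw [s_eq hskew, ← hu, _root_.map_smul, Matrix.mulVecLin_apply, Matrix.mulVec_mulVec]
    rw [Finset.sum_congr rfl fun b _ => hstep b, ← map_sum]
    have hsum : ∑ b : Fin 7, (-(u ⬝ᵥ ((γ b).mulVec Ψ))) • ((γ b).mulVec Ψ)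
        = -u + (Ψ ⬝ᵥ u) • Ψ := by
      have hc := complete hγ hskew hunit u
      have h2 : ∑ b : Fin 7, (((γ b).mulVec Ψ) ⬝ᵥ u) • ((γ b).mulVec Ψ)
          = u - (Ψ ⬝ᵥ u) • Ψ := by
        rw [eq_sub_iff_add_eq, add_comm]; exact hc
      calc ∑ b : Fin 7, (-(u ⬝ᵥ ((γ b).mulVec Ψ))) • ((γ b).mulVec Ψ)
          = -∑ b : Fin 7, (((γ b).mulVec Ψ) ⬝ᵥ u) • ((γ b).mulVec Ψ) := by
            rw [← Finset.sum_neg_distrib]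
            exact Finset.sum_congr rfl fun b _ => by
              rw [dotProduct_comm, neg_smul]
        _ = -(u - (Ψ ⬝ᵥ u) • Ψ) := by rw [h2]
        _ = -u + (Ψ ⬝ᵥ u) • Ψ := by funext j; simp; ring
    have hgu : (γ a).mulVec u = -((γ m).mulVec Ψ) := by
      rw [hu, Matrix.mulVec_mulVec, ← mul_assoc, hsq hγ, neg_mul, one_mul,
        Matrix.neg_mulVec]
    rw [hsum, hPsiu, map_add, map_neg, _root_.map_smul, Matrix.mulVecLin_apply,
      Matrix.mulVecLin_apply, hgu, neg_neg, neg_smul, ← sub_eq_add_neg]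
  rw [Finset.sum_congr rfl fun a _ => inner a, Finset.sum_sub_distrib, Finset.sum_const]
  have h3 : ∑ a : Fin 7, (if a = m then (1:ℝ) else 0) • (γ a).mulVec Ψ = (γ m).mulVec Ψ := by
    rw [Finset.sum_congr rfl fun a _ => (ite_smul _ _ _ _ : _ = if a = m then _ else _)]
    simp
  rw [h3]
  funext j; simp [Finset.card_univ]; ring

lemma hsplit {V : Type*} [AddCommMonoid V] (G : (Fin 2 → Fin 7) → V) :
    ∑ f : Fin 2 → Fin 7, G f = ∑ a : Fin 7, ∑ b : Fin 7, G ![a, b] :=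
  calc ∑ f : Fin 2 → Fin 7, G f = ∑ p : Fin 7 × Fin 7, G ![p.1, p.2] := by
        apply Fintype.sum_equiv (piFinTwoEquiv fun _ => Fin 7)
        intro f
        congr 1
        funext i
        fin_cases i <;> rfl
    _ = ∑ a : Fin 7, ∑ b : Fin 7, G ![a, b] := Fintype.sum_prod_type _

lemma main (hγ : CliffordRel γ) (hskew : ∀ i, (γ i)ᵀ = -γ i) (hunit : Ψ ⬝ᵥ Ψ = 1)
    (X : Fin 7 → ℝ) :
    (rho γ (inter X (omega3 γ Ψ))).mulVec Ψ = (3 : ℝ) • (gam γ X).mulVec Ψ := by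
  have hprod : ∀ f : Fin 2 → Fin 7,
      (List.ofFn fun i => γ (f i)).prod = γ (f 0) * γ (f 1) := by
    intro f; simp [List.ofFn_succ]
  have hgam : (gam γ X).mulVec Ψ = ∑ j, X j • (γ j).mulVec Ψ := by
    rw [gam, sumMat_mulVec]
    exact Finset.sum_congr rfl fun j _ => Matrix.smul_mulVec _ _ _
  have hterm : ∀ a b : Fin 7, inter X (omega3 γ Ψ) ![a, b]
      = ∑ j, X j * (-(((γ j * γ a * γ b).mulVec Ψ) ⬝ᵥ Ψ)) := fun a b => rfl
  rw [rho, Matrix.smul_mulVec, sumMat_mulVec]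
  have step1 : ∀ f : Fin 2 → Fin 7,
      ((inter X (omega3 γ Ψ)) f • (List.ofFn fun i => γ (f i)).prod).mulVec Ψ
        = (inter X (omega3 γ Ψ)) f • ((γ (f 0) * γ (f 1)).mulVec Ψ) := by
    intro f; rw [hprod, Matrix.smul_mulVec]
  rw [Finset.sum_congr rfl fun f _ => step1 f,
    hsplit (fun f => (inter X (omega3 γ Ψ)) f • ((γ (f 0) * γ (f 1)).mulVec Ψ))]
  have step2 : ∀ a b : Fin 7,
      (inter X (omega3 γ Ψ)) ![a, b] • ((γ (![a,b] 0) * γ (![a,b] 1)).mulVec Ψ)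
        = ∑ j, X j • ((-(((γ j * γ a * γ b).mulVec Ψ) ⬝ᵥ Ψ)) • ((γ a * γ b).mulVec Ψ)) := by
    intro a b
    show (inter X (omega3 γ Ψ)) ![a, b] • ((γ a * γ b).mulVec Ψ) = _
    rw [hterm, Finset.sum_smul]
    exact Finset.sum_congr rfl fun j _ => mul_smul _ _ _
  rw [Finset.sum_congr rfl fun a _ => Finset.sum_congr rfl fun b _ => step2 a b]
  rw [Finset.sum_congr rfl fun a _ => Finset.sum_comm, Finset.sum_comm]
  have step3 : ∀ j : Fin 7,
      ∑ a : Fin 7, ∑ b : Fin 7,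
          X j • ((-(((γ j * γ a * γ b).mulVec Ψ) ⬝ᵥ Ψ)) • ((γ a * γ b).mulVec Ψ))
        = X j • ((6:ℝ) • (γ j).mulVec Ψ) := by
    intro j
    rw [← key2 hγ hskew hunit j, Finset.smul_sum]
    exact Finset.sum_congr rfl fun a _ => (Finset.smul_sum).symm
  rw [Finset.sum_congr rfl fun j _ => step3 j, hgam]
  rw [Finset.sum_congr rfl fun j _ => smul_comm (X j) ((6:ℝ)) ((γ j).mulVec Ψ),
    ← Finset.smul_sum, smul_smul]
  norm_num [Nat.factorial]

end

/-- For all `X ∈ ℝ⁷`, `X·Ψ - (1/3)(X⌟ω³)·Ψ = 0`; equivalently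
`(X⌟ω³)·Ψ = 3·X·Ψ` (the decoupled torsion part of the Killing equation for
`T = -(4/3)·ω³`). -/
theorem omega3_interior_acts_three
    (γ : Fin 7 → Matrix (Fin 8) (Fin 8) ℝ) (hγ : CliffordRel γ)
    (hskew : ∀ i, (γ i)ᵀ = -γ i)
    (Ψ : Fin 8 → ℝ) (hunit : Ψ ⬝ᵥ Ψ = 1) :
    ∀ X : Fin 7 → ℝ,
      (gam γ X).mulVec Ψ - (1 / 3 : ℝ) • (rho γ (inter X (omega3 γ Ψ))).mulVec Ψ = 0
      ∧ (rho γ (inter X (omega3 γ Ψ))).mulVec Ψ = (3 : ℝ) • (gam γ X).mulVec Ψ := by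
  intro X
  have hmain := main hγ hskew hunit X
  refine ⟨?_, hmain⟩
  rw [hmain, smul_smul]
  norm_num
end

section
/- The common kernel in ℝ⁸ of the three matrices γ₃γ₄+γ₅γ₆, γ₃γ₅−γ₄γ₆ and γ₃γ₆+γ₄γ₅ is a linear subspace of dimension exactly 4. (Equivalently: under the action of su(2) ⊂ so(7) spanned by the 2-forms e₃₄+e₅₆, e₃₅−e₄₆, e₃₆+e₄₅, the real spin representation Δ₇ = ℝ⁸ splits as a 4-dimensional trivial part Δ₇⁰ plus a 4-dimensional complement.) -/
open Matrix

/-- The common kernel in `ℝ⁸` of `γ₃γ₄+γ₅γ₆`, `γ₃γ₅-γ₄γ₆`,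
`γ₃γ₆+γ₄γ₅` (0-based indices `2,…,5`) has dimension exactly `4`: the trivial
`su(2)`-part `Δ₇⁰` of the real spin representation `Δ₇ = ℝ⁸`. -/
theorem delta70_has_dim_four
    (γ : Fin 7 → Matrix (Fin 8) (Fin 8) ℝ) (hγ : CliffordRel γ) :
    Module.finrank ℝ
      ↥(LinearMap.ker (γ 2 * γ 3 + γ 4 * γ 5).mulVecLin ⊓
        LinearMap.ker (γ 2 * γ 4 - γ 3 * γ 5).mulVecLin ⊓
        LinearMap.ker (γ 2 * γ 5 + γ 3 * γ 4).mulVecLin) = 4 := by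
  classical
  have hsq : ∀ i, γ i * γ i = -1 := by
    intro i
    have h := hγ i i
    rw [if_pos rfl] at h
    have h2 : (2:ℝ) • (γ i * γ i) = (-2:ℝ) • 1 := by rw [two_smul]; exact h
    have h3 := congrArg (fun M => ((2:ℝ)⁻¹) • M) h2
    simpa [smul_smul] using h3
  have anti : ∀ i j, i ≠ j → γ i * γ j = -(γ j * γ i) := by
    intro i j h
    have h' := hγ i j
    rw [if_neg h] at h'
    exact eq_neg_of_add_eq_zero_left h'
  have sw : ∀ {i j : Fin 7}, i ≠ j → ∀ X, γ i * (γ j * X) = -(γ j * (γ i * X)) := by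
    intro i j h X
    rw [← mul_assoc, anti i j h, neg_mul, mul_assoc]
  have s32 := sw (show (3:Fin 7) ≠ 2 by decide)
  have s42 := sw (show (4:Fin 7) ≠ 2 by decide)
  have s52 := sw (show (5:Fin 7) ≠ 2 by decide)
  have s43 := sw (show (4:Fin 7) ≠ 3 by decide)
  have s53 := sw (show (5:Fin 7) ≠ 3 by decide)
  have s54 := sw (show (5:Fin 7) ≠ 4 by decide)
  have e32 := anti 3 2 (by decide)
  have e42 := anti 4 2 (by decide)
  have e52 := anti 5 2 (by decide)
  have e43 := anti 4 3 (by decide)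
  have e53 := anti 5 3 (by decide)
  have e54 := anti 5 4 (by decide)
  have q2 : ∀ X, γ 2 * (γ 2 * X) = -X := fun X => by rw [← mul_assoc, hsq 2, neg_one_mul]
  have q3 : ∀ X, γ 3 * (γ 3 * X) = -X := fun X => by rw [← mul_assoc, hsq 3, neg_one_mul]
  have q4 : ∀ X, γ 4 * (γ 4 * X) = -X := fun X => by rw [← mul_assoc, hsq 4, neg_one_mul]
  have q5 : ∀ X, γ 5 * (γ 5 * X) = -X := fun X => by rw [← mul_assoc, hsq 5, neg_one_mul]
  set P : Matrix (Fin 8) (Fin 8) ℝ := γ 2 * γ 3 * γ 4 * γ 5 with hP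
  have hP2 : P * P = 1 := by
    simp only [hP, mul_assoc, mul_neg, neg_neg, neg_mul, s32, s42, s52, s43, s53, s54,
      q2, q3, q4, q5, hsq, mul_neg_one, mul_one, neg_one_mul]
  have haP : γ 2 * P = -(P * γ 2) := by
    simp only [hP, mul_assoc, mul_neg, neg_neg, neg_mul, s32, s42, s52, s43, s53, s54,
      q2, q3, q4, q5, hsq, e32, e42, e52, e43, e53, e54, mul_neg_one, mul_one, neg_one_mul]
  have e1 : γ 2 * γ 3 + γ 4 * γ 5 = (γ 2 * γ 3) * (1 - P) := by
    rw [mul_sub, mul_one, hP]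
    simp only [mul_assoc, mul_neg, neg_neg, neg_mul, s32, s42, s52, s43, s53, s54,
      q2, q3, q4, q5, hsq, mul_neg_one, mul_one, neg_one_mul, sub_neg_eq_add]
  have e2 : γ 2 * γ 4 - γ 3 * γ 5 = (γ 2 * γ 4) * (1 - P) := by
    rw [mul_sub, mul_one, hP]
    simp only [mul_assoc, mul_neg, neg_neg, neg_mul, s32, s42, s52, s43, s53, s54,
      q2, q3, q4, q5, hsq, mul_neg_one, mul_one, neg_one_mul, sub_neg_eq_add]
  have e3 : γ 2 * γ 5 + γ 3 * γ 4 = (γ 2 * γ 5) * (1 - P) := by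
    rw [mul_sub, mul_one, hP]
    simp only [mul_assoc, mul_neg, neg_neg, neg_mul, s32, s42, s52, s43, s53, s54,
      q2, q3, q4, q5, hsq, mul_neg_one, mul_one, neg_one_mul, sub_neg_eq_add]
  -- invertibility: (γ j * γ i) * (γ i * γ j) = 1 for i ≠ j
  have inv2 : ∀ i j : Fin 7, i ≠ j → (γ j * γ i) * (γ i * γ j) = 1 := by
    intro i j h
    rw [mul_assoc, ← mul_assoc (γ i), hsq i, neg_one_mul, mul_neg, hsq j, neg_neg]
  have kerbot : ∀ M M' : Matrix (Fin 8) (Fin 8) ℝ, M' * M = 1 →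
      LinearMap.ker M.mulVecLin = ⊥ := by
    intro M M' h
    rw [Matrix.ker_mulVecLin_eq_bot_iff]
    intro v hv
    have h2 := congrArg (fun w => M' *ᵥ w) hv
    simpa [Matrix.mulVec_mulVec, h] using h2
  have kred : ∀ M : Matrix (Fin 8) (Fin 8) ℝ, LinearMap.ker M.mulVecLin = ⊥ →
      LinearMap.ker (M * (1 - P)).mulVecLin = LinearMap.ker (1 - P).mulVecLin := by
    intro M hM
    rw [Matrix.mulVecLin_mul]
    exact LinearMap.ker_comp_of_ker_eq_bot _ hM
  rw [e1, e2, e3, kred _ (kerbot _ _ (inv2 2 3 (by decide))),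
    kred _ (kerbot _ _ (inv2 2 4 (by decide))), kred _ (kerbot _ _ (inv2 2 5 (by decide))),
    inf_idem, inf_idem]
  -- now: finrank of U := ker (1-P).mulVecLin
  set U := LinearMap.ker (1 - P).mulVecLin with hU
  set V := LinearMap.ker (1 + P).mulVecLin with hV
  have hPP : ∀ v : Fin 8 → ℝ, P *ᵥ (P *ᵥ v) = v := by
    intro v
    rw [Matrix.mulVec_mulVec, hP2, Matrix.one_mulVec]
  have memU : ∀ v, v ∈ U ↔ P *ᵥ v = v := by
    intro v
    rw [hU, LinearMap.mem_ker, Matrix.mulVecLin_apply, Matrix.sub_mulVec,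
      Matrix.one_mulVec, sub_eq_zero, eq_comm]
  have memV : ∀ v, v ∈ V ↔ P *ᵥ v = -v := by
    intro v
    rw [hV, LinearMap.mem_ker, Matrix.mulVecLin_apply, Matrix.add_mulVec,
      Matrix.one_mulVec, add_eq_zero_iff_neg_eq, eq_comm]
  have hsup : U ⊔ V = ⊤ := by
    rw [eq_top_iff]
    intro v _
    have hu : ((2:ℝ)⁻¹) • (v + P *ᵥ v) ∈ U := by
      rw [memU, Matrix.mulVec_smul, Matrix.mulVec_add, hPP, add_comm]
    have hw : ((2:ℝ)⁻¹) • (v - P *ᵥ v) ∈ V := by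
      rw [memV, Matrix.mulVec_smul, Matrix.mulVec_sub, hPP, ← smul_neg, neg_sub]
    have hv : v = ((2:ℝ)⁻¹) • (v + P *ᵥ v) + ((2:ℝ)⁻¹) • (v - P *ᵥ v) := by
      rw [← smul_add]
      rw [show v + P *ᵥ v + (v - P *ᵥ v) = (2:ℝ) • v by rw [two_smul]; abel]
      rw [smul_smul]
      norm_num
    rw [hv]
    exact Submodule.add_mem_sup hu hw
  have hinf : U ⊓ V = ⊥ := by
    rw [eq_bot_iff]
    intro v ⟨h1, h2⟩
    rw [SetLike.mem_coe, memU] at h1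
    rw [SetLike.mem_coe, memV] at h2
    have : v = -v := h1.symm.trans h2
    have h3 : (2:ℝ) • v = 0 := by rw [two_smul]; nth_rewrite 1 [this]; abel
    have h4 : v = 0 := by
      rcases smul_eq_zero.mp h3 with h | h
      · norm_num at h
      · exact h
    simp [h4]
  -- γ 2 gives mutually inverse injections U → V and V → U
  have ginj : Function.Injective (γ 2).mulVecLin := by
    rw [← LinearMap.ker_eq_bot]
    refine kerbot _ (-(γ 2)) ?_
    rw [neg_mul, hsq 2, neg_neg]
  have hswap : ∀ v : Fin 8 → ℝ, P *ᵥ (γ 2 *ᵥ v) = -(γ 2 *ᵥ (P *ᵥ v)) := by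
    intro v
    rw [Matrix.mulVec_mulVec, Matrix.mulVec_mulVec, haP, Matrix.neg_mulVec, neg_neg]
  have hUV : ∀ x ∈ U, (γ 2).mulVecLin x ∈ V := by
    intro x hx
    rw [memU] at hx
    rw [memV, Matrix.mulVecLin_apply, hswap, hx]
  have hVU : ∀ x ∈ V, (γ 2).mulVecLin x ∈ U := by
    intro x hx
    rw [memV] at hx
    rw [memU, Matrix.mulVecLin_apply, hswap, hx, Matrix.mulVec_neg, neg_neg]
  have le1 : Module.finrank ℝ U ≤ Module.finrank ℝ V := by
    apply LinearMap.finrank_le_finrank_of_injective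
      (f := ((γ 2).mulVecLin).restrict hUV)
    intro x y hxy
    exact Subtype.ext (ginj (congrArg Subtype.val hxy))
  have le2 : Module.finrank ℝ V ≤ Module.finrank ℝ U := by
    apply LinearMap.finrank_le_finrank_of_injective
      (f := ((γ 2).mulVecLin).restrict hVU)
    intro x y hxy
    exact Subtype.ext (ginj (congrArg Subtype.val hxy))
  have heq : Module.finrank ℝ U = Module.finrank ℝ V := le_antisymm le1 le2
  have hdim := Submodule.finrank_sup_add_finrank_inf_eq U V
  rw [hsup, hinf, finrank_top, finrank_bot] at hdim
  have h8 : Module.finrank ℝ (Fin 8 → ℝ) = 8 := by simp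
  omega
end
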